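/- There exists a constant c₀ > 0 depending only on L such that for all ρ₂, ρ₃ ∈ (0,1) there exists a constant c > 0, depending only on c_*, L, ρ₂ and ρ₃, such that for all t ∈ [0,T]: ‖e_u'(t)‖_{A(t)}² + (1/2)·(d/dt)(‖e_w(t)‖_{A(t)}²) ≤ (c₀/(4ρ₃))·‖e_u'(t)‖_{M(t)}² + (ρ₂ + c₀ρ₃)·‖e_u'(t)‖_{K(t)}² + c·‖e_u(t)‖_{K(t)}² + c·‖e_w(t)‖_{K(t)}² + c·(‖d_u(t)‖_{M(t)}² + ‖d_u'(t)‖_{M(t)}² + ‖d_w(t)‖_{M(t)}² + ‖d_w'(t)‖_{M(t)}²) + (d/dt)(e_w(t)ᵀF(t)) − (d/dt)(e_w(t)ᵀM'(t)e_u(t)) − (d/dt)(e_w(t)ᵀM(t)d_u(t)). (Energy estimate (ii.b) of the stability proof; the terms containing e_w' are rewritten as total time derivatives before estimating.) -/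

import Mathlib

set_option maxHeartbeats 1000000


open Matrix Set

/-- The quadratic form `zᵀ P z` associated with a square matrix `P`. -/
def qf {N : ℕ} (P : Matrix (Fin N) (Fin N) ℝ) (z : Fin N → ℝ) : ℝ :=
  z ⬝ᵥ P.mulVec z

/-- Common hypotheses on the error equations of the semi-discrete Cahn–Hilliard-type
system: `M`, `A` are `C¹` families of matrices, `M(t)` is symmetric positive definite,
`A(t)` is symmetric positive semidefinite, the functions `e_u, e_w, d_u, d_w, F, G` are
`C¹` (with the indicated derivatives), and the two error equations hold on `[0, T]`. -/
def CHBasic {N : ℕ} (T : ℝ)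
    (M A M' A' : ℝ → Matrix (Fin N) (Fin N) ℝ)
    (eu ew eu' ew' du dw du' dw' F G F' G' : ℝ → Fin N → ℝ)
    (ϑ : Fin N → ℝ) : Prop :=
  (∀ t ∈ Icc (0:ℝ) T, ∀ (i j : Fin N), HasDerivAt (fun s => M s i j) (M' t i j) t) ∧
  (∀ t ∈ Icc (0:ℝ) T, ∀ (i j : Fin N), HasDerivAt (fun s => A s i j) (A' t i j) t) ∧
  (∀ (i j : Fin N), ContinuousOn (fun s => M' s i j) (Icc (0:ℝ) T)) ∧
  (∀ (i j : Fin N), ContinuousOn (fun s => A' s i j) (Icc (0:ℝ) T)) ∧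
  (∀ t ∈ Icc (0:ℝ) T, (M t).PosDef) ∧
  (∀ t ∈ Icc (0:ℝ) T, (A t).PosSemidef) ∧
  (∀ t ∈ Icc (0:ℝ) T, HasDerivAt eu (eu' t) t) ∧
  (∀ t ∈ Icc (0:ℝ) T, HasDerivAt ew (ew' t) t) ∧
  (∀ t ∈ Icc (0:ℝ) T, HasDerivAt du (du' t) t) ∧
  (∀ t ∈ Icc (0:ℝ) T, HasDerivAt dw (dw' t) t) ∧
  (∀ t ∈ Icc (0:ℝ) T, HasDerivAt F (F' t) t) ∧
  (∀ t ∈ Icc (0:ℝ) T, HasDerivAt G (G' t) t) ∧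
  ContinuousOn eu' (Icc (0:ℝ) T) ∧ ContinuousOn ew' (Icc (0:ℝ) T) ∧
  ContinuousOn du' (Icc (0:ℝ) T) ∧ ContinuousOn dw' (Icc (0:ℝ) T) ∧
  ContinuousOn F' (Icc (0:ℝ) T) ∧ ContinuousOn G' (Icc (0:ℝ) T) ∧
  (∀ t ∈ Icc (0:ℝ) T,
      (M t).mulVec (eu' t) + (A t).mulVec (ew t)
        = F t - (M' t).mulVec (eu t) - (M t).mulVec (du t)) ∧
  (∀ t ∈ Icc (0:ℝ) T,
      (M t).mulVec (ew t) - (A t).mulVec (eu t)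
        = G t - (M t).mulVec (dw t) + ϑ)

/-- The (semi-)norm `‖z‖_P = (zᵀ P z)^{1/2}` induced by a matrix `P`. -/
noncomputable def mnorm {N : ℕ} (P : Matrix (Fin N) (Fin N) ℝ) (z : Fin N → ℝ) : ℝ :=
  Real.sqrt (qf P z)

/-- The squared norm `‖z‖_{K}² = ‖z‖_{M}² + ‖z‖_{A}²` where `K = M + A`. -/
def kq {N : ℕ} (M A : Matrix (Fin N) (Fin N) ℝ) (z : Fin N → ℝ) : ℝ :=
  qf M z + qf A z

/-- The norm `‖z‖_{K} = (‖z‖_{M}² + ‖z‖_{A}²)^{1/2}` where `K = M + A`. -/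
noncomputable def knorm {N : ℕ} (M A : Matrix (Fin N) (Fin N) ℝ) (z : Fin N → ℝ) : ℝ :=
  Real.sqrt (kq M A z)

/-- Full hypothesis set of the stability proof: the basic error-equation setting,
the bounds `|wᵀM'(t)z| ≤ c_*‖w‖_{M(t)}‖z‖_{M(t)}`, `|wᵀA'(t)z| ≤ c_*‖w‖_{A(t)}‖z‖_{A(t)}`,
vanishing initial errors, `ϑ = M(0)d_w(0)`, and the locally-Lipschitz-type bounds on the
nonlinear differences `F`, `G` and their time derivatives. -/
def CHHyps {N : ℕ} (T cstar L : ℝ)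
    (M A M' A' : ℝ → Matrix (Fin N) (Fin N) ℝ)
    (eu ew eu' ew' du dw du' dw' F G F' G' : ℝ → Fin N → ℝ)
    (ϑ : Fin N → ℝ) : Prop :=
  CHBasic T M A M' A' eu ew eu' ew' du dw du' dw' F G F' G' ϑ ∧
  (∀ t ∈ Icc (0:ℝ) T, ∀ w z : Fin N → ℝ,
      |w ⬝ᵥ (M' t).mulVec z| ≤ cstar * mnorm (M t) w * mnorm (M t) z) ∧
  (∀ t ∈ Icc (0:ℝ) T, ∀ w z : Fin N → ℝ,
      |w ⬝ᵥ (A' t).mulVec z| ≤ cstar * mnorm (A t) w * mnorm (A t) z) ∧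
  eu 0 = 0 ∧ ew 0 = 0 ∧ ϑ = (M 0).mulVec (dw 0) ∧
  (∀ t ∈ Icc (0:ℝ) T, ∀ v : Fin N → ℝ,
      |v ⬝ᵥ F t| ≤ L * mnorm (M t) v * knorm (M t) (A t) (eu t)) ∧
  (∀ t ∈ Icc (0:ℝ) T, ∀ v : Fin N → ℝ,
      |v ⬝ᵥ G t| ≤ L * mnorm (M t) v * knorm (M t) (A t) (eu t)) ∧
  (∀ t ∈ Icc (0:ℝ) T, ∀ v : Fin N → ℝ,
      |v ⬝ᵥ F' t| ≤ L * mnorm (M t) v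
        * (knorm (M t) (A t) (eu t) + knorm (M t) (A t) (eu' t))) ∧
  (∀ t ∈ Icc (0:ℝ) T, ∀ v : Fin N → ℝ,
      |v ⬝ᵥ G' t| ≤ L * mnorm (M t) v
        * (knorm (M t) (A t) (eu t) + knorm (M t) (A t) (eu' t)))


section Helpers

lemma hasDerivAt_bilin {N : ℕ} {P : ℝ → Matrix (Fin N) (Fin N) ℝ}
    {P' : Matrix (Fin N) (Fin N) ℝ}
    {u v : ℝ → Fin N → ℝ} {u₁ v₁ : Fin N → ℝ} {t : ℝ}
    (hP : ∀ i j, HasDerivAt (fun s => P s i j) (P' i j) t)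
    (hu : ∀ i, HasDerivAt (fun s => u s i) (u₁ i) t)
    (hv : ∀ i, HasDerivAt (fun s => v s i) (v₁ i) t) :
    HasDerivAt (fun s => u s ⬝ᵥ (P s).mulVec (v s))
      (u₁ ⬝ᵥ (P t).mulVec (v t) + u t ⬝ᵥ P'.mulVec (v t) + u t ⬝ᵥ (P t).mulVec v₁) t := by
  have h : HasDerivAt (fun s => ∑ i, u s i * ∑ j, P s i j * v s j)
      (∑ i, (u₁ i * ∑ j, P t i j * v t j
        + u t i * ∑ j, (P' i j * v t j + P t i j * v₁ j))) t :=
    HasDerivAt.fun_sum fun i _ =>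
      (hu i).mul (HasDerivAt.fun_sum fun j _ => (hP i j).mul (hv j))
  have e1 : (fun s => u s ⬝ᵥ (P s).mulVec (v s))
      = fun s => ∑ i, u s i * ∑ j, P s i j * v s j := by
    funext s; simp [dotProduct, Matrix.mulVec]
  rw [e1]
  convert h using 1
  simp [dotProduct, Matrix.mulVec, Finset.sum_add_distrib, Finset.mul_sum, mul_add]
  ring

lemma hasDerivAt_dot {N : ℕ} {u v : ℝ → Fin N → ℝ} {u₁ v₁ : Fin N → ℝ} {t : ℝ}
    (hu : ∀ i, HasDerivAt (fun s => u s i) (u₁ i) t)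
    (hv : ∀ i, HasDerivAt (fun s => v s i) (v₁ i) t) :
    HasDerivAt (fun s => u s ⬝ᵥ v s) (u₁ ⬝ᵥ v t + u t ⬝ᵥ v₁) t := by
  have h : HasDerivAt (fun s => ∑ i, u s i * v s i)
      (∑ i, (u₁ i * v t i + u t i * v₁ i)) t :=
    HasDerivAt.fun_sum fun i _ => (hu i).mul (hv i)
  have e1 : (fun s => u s ⬝ᵥ v s) = fun s => ∑ i, u s i * v s i := by
    funext s; simp [dotProduct]
  rw [e1]
  convert h using 1
  simp [dotProduct, Finset.sum_add_distrib]

lemma symm_dot {N : ℕ} {P : Matrix (Fin N) (Fin N) ℝ} (hP : Pᵀ = P) (u v : Fin N → ℝ) :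
    u ⬝ᵥ P.mulVec v = v ⬝ᵥ P.mulVec u := by
  rw [Matrix.dotProduct_mulVec, ← Matrix.mulVec_transpose, hP, dotProduct_comm]

lemma qf_nonneg {N : ℕ} {P : Matrix (Fin N) (Fin N) ℝ} (hP : P.PosSemidef) (z : Fin N → ℝ) :
    0 ≤ qf P z := by
  have := hP.dotProduct_mulVec_nonneg z
  simpa [qf, star_trivial] using this

lemma posSemidef_symm {N : ℕ} {P : Matrix (Fin N) (Fin N) ℝ} (hP : P.PosSemidef) : Pᵀ = P := by
  have := hP.1
  simpa [Matrix.IsHermitian, Matrix.conjTranspose_eq_transpose_of_trivial] using this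

lemma qf_expand {N : ℕ} {P : Matrix (Fin N) (Fin N) ℝ} (hP : Pᵀ = P) (u v : Fin N → ℝ) (x : ℝ) :
    qf P (u + x • v) = qf P v * (x * x) + (2 * (u ⬝ᵥ P.mulVec v)) * x + qf P u := by
  simp [qf, Matrix.mulVec_add, dotProduct_add, add_dotProduct,
    Matrix.mulVec_smul, dotProduct_smul, smul_dotProduct, smul_eq_mul]
  rw [show v ⬝ᵥ P.mulVec u = u ⬝ᵥ P.mulVec v from symm_dot hP v u]
  ring

lemma cs {N : ℕ} {P : Matrix (Fin N) (Fin N) ℝ} (hP : P.PosSemidef) (u v : Fin N → ℝ) :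
    |u ⬝ᵥ P.mulVec v| ≤ mnorm P u * mnorm P v := by
  have hpos : ∀ x : ℝ, 0 ≤ qf P v * (x * x) + (2 * (u ⬝ᵥ P.mulVec v)) * x + qf P u := by
    intro x
    rw [← qf_expand (posSemidef_symm hP) u v x]
    exact qf_nonneg hP _
  have hd := discrim_le_zero hpos
  rw [discrim] at hd
  have h2 : (u ⬝ᵥ P.mulVec v)^2 ≤ qf P u * qf P v := by nlinarith
  have := Real.sqrt_le_sqrt h2
  rw [Real.sqrt_sq_eq_abs, Real.sqrt_mul (qf_nonneg hP u)] at this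
  exact this

lemma young {X C p q ε : ℝ} (hε : 0 < ε) (hp : 0 ≤ p) (hq : 0 ≤ q)
    (h : X ≤ C * Real.sqrt p * Real.sqrt q) :
    X ≤ ε * p + (C^2/(4*ε)) * q := by
  have hsp := Real.sq_sqrt hp
  have hsq := Real.sq_sqrt hq
  have key : C * Real.sqrt p * Real.sqrt q ≤ ε * p + (C^2/(4*ε)) * q := by
    have h4 : 0 < 4 * ε := by linarith
    rw [← mul_le_mul_iff_right₀ h4]
    have e : 4 * ε * (ε * p + (C^2/(4*ε)) * q) = 4 * ε^2 * p + C^2 * q := by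
      field_simp
    rw [e]
    nlinarith [sq_nonneg (2 * ε * Real.sqrt p - C * Real.sqrt q), hsp, hsq, hε]
  linarith

lemma halfb {X C p q : ℝ} (hC : 0 ≤ C) (hp : 0 ≤ p) (hq : 0 ≤ q)
    (h : X ≤ C * Real.sqrt p * Real.sqrt q) :
    X ≤ C/2 * p + C/2 * q := by
  have hsp := Real.sq_sqrt hp
  have hsq := Real.sq_sqrt hq
  nlinarith [mul_nonneg hC (sq_nonneg (Real.sqrt p - Real.sqrt q))]

lemma mul3 {C x y x' y' : ℝ} (hC : 0 ≤ C) (hx : 0 ≤ x) (hy : 0 ≤ y)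
    (hxx : x ≤ x') (hyy : y ≤ y') : C * x * y ≤ C * x' * y' := by
  have h1 : x * y ≤ x' * y' := mul_le_mul hxx hyy hy (le_trans hx hxx)
  calc C * x * y = C * (x * y) := by ring
    _ ≤ C * (x' * y') := mul_le_mul_of_nonneg_left h1 hC
    _ = C * x' * y' := by ring

end Helpers

/-- Energy estimate (ii.b) of the stability proof: there is `c₀ > 0` depending only on
`L` such that for all `ρ₂, ρ₃ ∈ (0,1)` there is `c > 0` (depending only on `c_*`, `L`,
`ρ₂`, `ρ₃`) with
`‖e_u'‖_{A(t)}² + (1/2)·(d/dt)(‖e_w‖_{A(t)}²)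
  ≤ (c₀/(4ρ₃))·‖e_u'‖_{M(t)}² + (ρ₂ + c₀ρ₃)·‖e_u'‖_{K(t)}² + c·‖e_u‖_{K(t)}²
    + c·‖e_w‖_{K(t)}² + c·(‖d_u‖² + ‖d_u'‖² + ‖d_w‖² + ‖d_w'‖²)_{M(t)}
    + (d/dt)(e_wᵀF) − (d/dt)(e_wᵀM'e_u) − (d/dt)(e_wᵀM d_u)` on `[0,T]`;
the terms containing `e_w'` are rewritten as total time derivatives. -/
theorem stmt9 (L : ℝ) (hL : 0 < L) :
    ∃ c₀ > (0:ℝ), ∀ (cstar : ℝ), 0 < cstar →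
      ∀ ρ₂ ρ₃ : ℝ, ρ₂ ∈ Ioo (0:ℝ) 1 → ρ₃ ∈ Ioo (0:ℝ) 1 →
      ∃ c > (0:ℝ), ∀ (T : ℝ), 0 < T → ∀ (N : ℕ), 1 ≤ N →
        ∀ (M A M' A' M'' : ℝ → Matrix (Fin N) (Fin N) ℝ)
          (eu ew eu' ew' du dw du' dw' F G F' G' : ℝ → Fin N → ℝ)
          (ϑ : Fin N → ℝ),
          CHHyps T cstar L M A M' A' eu ew eu' ew' du dw du' dw' F G F' G' ϑ →
          (∀ t ∈ Icc (0:ℝ) T, ∀ (i j : Fin N),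
              HasDerivAt (fun s => M' s i j) (M'' t i j) t) →
          (∀ (i j : Fin N), ContinuousOn (fun s => M'' s i j) (Icc (0:ℝ) T)) →
          (∀ t ∈ Icc (0:ℝ) T, ∀ w z : Fin N → ℝ,
              |w ⬝ᵥ (M'' t).mulVec z| ≤ cstar * mnorm (M t) w * mnorm (M t) z) →
          ∀ t ∈ Icc (0:ℝ) T,
            qf (A t) (eu' t) + (1/2) * deriv (fun s => qf (A s) (ew s)) t
              ≤ (c₀/(4*ρ₃)) * qf (M t) (eu' t)
                + (ρ₂ + c₀*ρ₃) * kq (M t) (A t) (eu' t)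
                + c * kq (M t) (A t) (eu t)
                + c * kq (M t) (A t) (ew t)
                + c * (qf (M t) (du t) + qf (M t) (du' t)
                    + qf (M t) (dw t) + qf (M t) (dw' t))
                + deriv (fun s => ew s ⬝ᵥ F s) t
                - deriv (fun s => ew s ⬝ᵥ (M' s).mulVec (eu s)) t
                - deriv (fun s => ew s ⬝ᵥ (M s).mulVec (du s)) t := by
  refine ⟨L^2 + 6, by positivity, ?_⟩
  intro cstar hcstar ρ₂ ρ₃ hρ₂ hρ₃
  obtain ⟨hρ₂0, hρ₂1⟩ := hρ₂
  obtain ⟨hρ₃0, hρ₃1⟩ := hρ₃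
  refine ⟨L + 2*cstar + 1 + L^2/(2*ρ₂) + (2*cstar^2)/(4*ρ₃) + 1/(4*ρ₃), ?_, ?_⟩
  · have h1 : (0:ℝ) ≤ L^2/(2*ρ₂) := by positivity
    have h2 : (0:ℝ) ≤ (2*cstar^2)/(4*ρ₃) := by positivity
    have h3 : (0:ℝ) ≤ 1/(4*ρ₃) := by positivity
    linarith
  intro T hT N hN M A M' A' M'' eu ew eu' ew' du dw du' dw' F G F' G' ϑ hyps
    hM''d hM''c hM''bd t ht
  obtain ⟨hb, hM'bd, hA'bd, -, -, -, hFbd, hGbd, hF'bd, hG'bd⟩ := hyps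
  obtain ⟨hMd, hAd, -, -, hMpd, hApsd, heu, hew, hdu, hdw, hF, hG, -, -, -, -, -, -,
    heq1, heq2⟩ := hb
  -- component derivatives
  have hceu := hasDerivAt_pi.mp (heu t ht)
  have hcew := hasDerivAt_pi.mp (hew t ht)
  have hcdu := hasDerivAt_pi.mp (hdu t ht)
  have hcdw := hasDerivAt_pi.mp (hdw t ht)
  have hcF := hasDerivAt_pi.mp (hF t ht)
  have hcG := hasDerivAt_pi.mp (hG t ht)
  -- symmetry and positivity facts
  have hMsym : (M t)ᵀ = M t := posSemidef_symm (hMpd t ht).posSemidef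
  have hAsym : (A t)ᵀ = A t := posSemidef_symm (hApsd t ht)
  have hqM : ∀ v, 0 ≤ qf (M t) v := qf_nonneg (hMpd t ht).posSemidef
  have hqA : ∀ v, 0 ≤ qf (A t) v := qf_nonneg (hApsd t ht)
  have hkq : ∀ v, 0 ≤ kq (M t) (A t) v := fun v => by
    have := hqM v; have := hqA v; simp only [kq]; linarith
  have hmk : ∀ v, mnorm (M t) v ≤ Real.sqrt (kq (M t) (A t) v) := fun v =>
    Real.sqrt_le_sqrt (by have := hqA v; simp only [kq]; linarith)
  have hak : ∀ v, mnorm (A t) v ≤ Real.sqrt (kq (M t) (A t) v) := fun v =>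
    Real.sqrt_le_sqrt (by have := hqM v; simp only [kq]; linarith)
  have hmn : ∀ v, 0 ≤ mnorm (M t) v := fun v => Real.sqrt_nonneg _
  have han : ∀ v, 0 ≤ mnorm (A t) v := fun v => Real.sqrt_nonneg _
  have hknorm : ∀ v, knorm (M t) (A t) v = Real.sqrt (kq (M t) (A t) v) := fun _ => rfl
  -- derivative computations
  have dA : deriv (fun s => qf (A s) (ew s)) t
      = ew' t ⬝ᵥ (A t).mulVec (ew t) + ew t ⬝ᵥ (A' t).mulVec (ew t)
        + ew t ⬝ᵥ (A t).mulVec (ew' t) :=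
    HasDerivAt.deriv (hasDerivAt_bilin (hAd t ht) hcew hcew)
  have dF : deriv (fun s => ew s ⬝ᵥ F s) t = ew' t ⬝ᵥ F t + ew t ⬝ᵥ F' t :=
    HasDerivAt.deriv (hasDerivAt_dot hcew hcF)
  have dM' : deriv (fun s => ew s ⬝ᵥ (M' s).mulVec (eu s)) t
      = ew' t ⬝ᵥ (M' t).mulVec (eu t) + ew t ⬝ᵥ (M'' t).mulVec (eu t)
        + ew t ⬝ᵥ (M' t).mulVec (eu' t) :=
    HasDerivAt.deriv (hasDerivAt_bilin (hM''d t ht) hcew hceu)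
  have dM : deriv (fun s => ew s ⬝ᵥ (M s).mulVec (du s)) t
      = ew' t ⬝ᵥ (M t).mulVec (du t) + ew t ⬝ᵥ (M' t).mulVec (du t)
        + ew t ⬝ᵥ (M t).mulVec (du' t) :=
    HasDerivAt.deriv (hasDerivAt_bilin (hMd t ht) hcew hcdu)
  -- equation (1) dotted with ew'
  have eqB : ew' t ⬝ᵥ (M t).mulVec (eu' t) + ew' t ⬝ᵥ (A t).mulVec (ew t)
      = ew' t ⬝ᵥ F t - ew' t ⬝ᵥ (M' t).mulVec (eu t) - ew' t ⬝ᵥ (M t).mulVec (du t) := by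
    have h := congrArg (fun z => ew' t ⬝ᵥ z) (heq1 t ht)
    simpa [dotProduct_add, dotProduct_sub] using h
  -- derivative of equation (2) dotted with eu' t
  have eqC : (eu' t ⬝ᵥ (M' t).mulVec (ew t) + eu' t ⬝ᵥ (M t).mulVec (ew' t))
      - (eu' t ⬝ᵥ (A' t).mulVec (eu t) + eu' t ⬝ᵥ (A t).mulVec (eu' t))
      - eu' t ⬝ᵥ G' t
      + (eu' t ⬝ᵥ (M' t).mulVec (dw t) + eu' t ⬝ᵥ (M t).mulVec (dw' t)) = 0 := by
    set h : ℝ → ℝ := fun s => eu' t ⬝ᵥ (M s).mulVec (ew s)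
      - eu' t ⬝ᵥ (A s).mulVec (eu s) - eu' t ⬝ᵥ G s + eu' t ⬝ᵥ (M s).mulVec (dw s) with hdef
    have hc0 : ∀ i, HasDerivAt (fun s => (fun _ : ℝ => eu' t) s i) ((0 : Fin N → ℝ) i) t :=
      fun i => hasDerivAt_const t _
    have h1 : HasDerivAt (fun s => eu' t ⬝ᵥ (M s).mulVec (ew s))
        (eu' t ⬝ᵥ (M' t).mulVec (ew t) + eu' t ⬝ᵥ (M t).mulVec (ew' t)) t := by
      have := hasDerivAt_bilin (hMd t ht) hc0 hcew
      simpa using this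
    have h2 : HasDerivAt (fun s => eu' t ⬝ᵥ (A s).mulVec (eu s))
        (eu' t ⬝ᵥ (A' t).mulVec (eu t) + eu' t ⬝ᵥ (A t).mulVec (eu' t)) t := by
      have := hasDerivAt_bilin (hAd t ht) hc0 hceu
      simpa using this
    have h3 : HasDerivAt (fun s => eu' t ⬝ᵥ G s) (eu' t ⬝ᵥ G' t) t := by
      have := hasDerivAt_dot hc0 hcG
      simpa using this
    have h4 : HasDerivAt (fun s => eu' t ⬝ᵥ (M s).mulVec (dw s))
        (eu' t ⬝ᵥ (M' t).mulVec (dw t) + eu' t ⬝ᵥ (M t).mulVec (dw' t)) t := by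
      have := hasDerivAt_bilin (hMd t ht) hc0 hcdw
      simpa using this
    have hD : HasDerivAt h
        ((eu' t ⬝ᵥ (M' t).mulVec (ew t) + eu' t ⬝ᵥ (M t).mulVec (ew' t))
          - (eu' t ⬝ᵥ (A' t).mulVec (eu t) + eu' t ⬝ᵥ (A t).mulVec (eu' t))
          - eu' t ⬝ᵥ G' t
          + (eu' t ⬝ᵥ (M' t).mulVec (dw t) + eu' t ⬝ᵥ (M t).mulVec (dw' t))) t :=
      ((h1.sub h2).sub h3).add h4
    have hconst : ∀ s ∈ Icc (0:ℝ) T, h s = eu' t ⬝ᵥ ϑ := by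
      intro s hs
      have h := congrArg (fun z => eu' t ⬝ᵥ z) (heq2 s hs)
      simp only [dotProduct_add, dotProduct_sub] at h
      simp only [hdef]
      linarith
    have hW1 := hD.hasDerivWithinAt (s := Icc (0:ℝ) T)
    have hW2 : HasDerivWithinAt h 0 (Icc (0:ℝ) T) t :=
      (hasDerivWithinAt_const t _ (eu' t ⬝ᵥ ϑ)).congr hconst (hconst t ht)
    exact UniqueDiffWithinAt.eq_deriv _ ((uniqueDiffOn_Icc hT) t ht) hW1 hW2
  -- symmetry identities
  have symm1 : eu' t ⬝ᵥ (M t).mulVec (ew' t) = ew' t ⬝ᵥ (M t).mulVec (eu' t) :=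
    symm_dot hMsym _ _
  have symm2 : ew t ⬝ᵥ (A t).mulVec (ew' t) = ew' t ⬝ᵥ (A t).mulVec (ew t) :=
    symm_dot hAsym _ _
  -- term bounds
  have B1 : ew t ⬝ᵥ (A' t).mulVec (ew t)
      ≤ cstar/2 * kq (M t) (A t) (ew t) + cstar/2 * kq (M t) (A t) (ew t) := by
    refine halfb hcstar.le (hkq _) (hkq _) ?_
    calc ew t ⬝ᵥ (A' t).mulVec (ew t) ≤ |ew t ⬝ᵥ (A' t).mulVec (ew t)| := le_abs_self _
      _ ≤ cstar * mnorm (A t) (ew t) * mnorm (A t) (ew t) := hA'bd t ht _ _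
      _ ≤ _ := mul3 hcstar.le (han _) (han _) (hak _) (hak _)
  have B2 : -(ew t ⬝ᵥ F' t) ≤ (ρ₂/2) * kq (M t) (A t) (eu' t)
      + (L/2 + L^2/(2*ρ₂)) * kq (M t) (A t) (ew t) + (L/2) * kq (M t) (A t) (eu t) := by
    have habs : -(ew t ⬝ᵥ F' t) ≤ L * mnorm (M t) (ew t) * knorm (M t) (A t) (eu t)
        + L * mnorm (M t) (ew t) * knorm (M t) (A t) (eu' t) := by
      have := hF'bd t ht (ew t)
      have h2 := neg_le_abs (ew t ⬝ᵥ F' t)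
      nlinarith [this]
    have S1 : L * mnorm (M t) (ew t) * knorm (M t) (A t) (eu t)
        ≤ L/2 * kq (M t) (A t) (ew t) + L/2 * kq (M t) (A t) (eu t) := by
      refine halfb hL.le (hkq _) (hkq _) ?_
      rw [hknorm]
      exact mul3 hL.le (hmn _) (Real.sqrt_nonneg _) (hmk _) le_rfl
    have S2 : L * mnorm (M t) (ew t) * knorm (M t) (A t) (eu' t)
        ≤ (ρ₂/2) * kq (M t) (A t) (eu' t) + (L^2/(4*(ρ₂/2))) * kq (M t) (A t) (ew t) := by
      refine young (by linarith) (hkq _) (hkq _) ?_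
      rw [hknorm]
      calc L * mnorm (M t) (ew t) * Real.sqrt (kq (M t) (A t) (eu' t))
          = L * Real.sqrt (kq (M t) (A t) (eu' t)) * mnorm (M t) (ew t) := by ring
        _ ≤ _ := mul3 hL.le (Real.sqrt_nonneg _) (hmn _) le_rfl (hmk _)
    have he : L^2/(4*(ρ₂/2)) = L^2/(2*ρ₂) := by ring_nf
    rw [he] at S2
    linarith
  have B3 : ew t ⬝ᵥ (M'' t).mulVec (eu t)
      ≤ cstar/2 * kq (M t) (A t) (ew t) + cstar/2 * kq (M t) (A t) (eu t) := by
    refine halfb hcstar.le (hkq _) (hkq _) ?_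
    calc ew t ⬝ᵥ (M'' t).mulVec (eu t) ≤ |ew t ⬝ᵥ (M'' t).mulVec (eu t)| := le_abs_self _
      _ ≤ cstar * mnorm (M t) (ew t) * mnorm (M t) (eu t) := hM''bd t ht _ _
      _ ≤ _ := mul3 hcstar.le (hmn _) (hmn _) (hmk _) (hmk _)
  have B4 : ew t ⬝ᵥ (M' t).mulVec (eu' t)
      ≤ ρ₃ * kq (M t) (A t) (eu' t) + (cstar^2/(4*ρ₃)) * kq (M t) (A t) (ew t) := by
    refine young hρ₃0 (hkq _) (hkq _) ?_
    calc ew t ⬝ᵥ (M' t).mulVec (eu' t) ≤ |ew t ⬝ᵥ (M' t).mulVec (eu' t)| := le_abs_self _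
      _ ≤ cstar * mnorm (M t) (ew t) * mnorm (M t) (eu' t) := hM'bd t ht _ _
      _ = cstar * mnorm (M t) (eu' t) * mnorm (M t) (ew t) := by ring
      _ ≤ _ := mul3 hcstar.le (hmn _) (hmn _) (hmk _) (hmk _)
  have B5 : ew t ⬝ᵥ (M' t).mulVec (du t)
      ≤ cstar/2 * kq (M t) (A t) (ew t) + cstar/2 * qf (M t) (du t) := by
    refine halfb hcstar.le (hkq _) (hqM _) ?_
    calc ew t ⬝ᵥ (M' t).mulVec (du t) ≤ |ew t ⬝ᵥ (M' t).mulVec (du t)| := le_abs_self _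
      _ ≤ cstar * mnorm (M t) (ew t) * mnorm (M t) (du t) := hM'bd t ht _ _
      _ ≤ _ := mul3 hcstar.le (hmn _) (hmn _) (hmk _) le_rfl
  have B6 : ew t ⬝ᵥ (M t).mulVec (du' t)
      ≤ (1:ℝ)/2 * kq (M t) (A t) (ew t) + (1:ℝ)/2 * qf (M t) (du' t) := by
    refine halfb zero_le_one (hkq _) (hqM _) ?_
    calc ew t ⬝ᵥ (M t).mulVec (du' t) ≤ |ew t ⬝ᵥ (M t).mulVec (du' t)| := le_abs_self _
      _ ≤ mnorm (M t) (ew t) * mnorm (M t) (du' t) := cs (hMpd t ht).posSemidef _ _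
      _ = 1 * mnorm (M t) (ew t) * mnorm (M t) (du' t) := by ring
      _ ≤ _ := mul3 zero_le_one (hmn _) (hmn _) (hmk _) le_rfl
  have B7 : -(eu' t ⬝ᵥ (A' t).mulVec (eu t))
      ≤ ρ₃ * kq (M t) (A t) (eu' t) + (cstar^2/(4*ρ₃)) * kq (M t) (A t) (eu t) := by
    refine young hρ₃0 (hkq _) (hkq _) ?_
    calc -(eu' t ⬝ᵥ (A' t).mulVec (eu t)) ≤ |eu' t ⬝ᵥ (A' t).mulVec (eu t)| := neg_le_abs _
      _ ≤ cstar * mnorm (A t) (eu' t) * mnorm (A t) (eu t) := hA'bd t ht _ _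
      _ ≤ _ := mul3 hcstar.le (han _) (han _) (hak _) (hak _)
  have B8 : -(eu' t ⬝ᵥ G' t) ≤ (ρ₂/2) * kq (M t) (A t) (eu' t)
      + (L^2/(2*ρ₂)) * kq (M t) (A t) (eu t)
      + ρ₃ * kq (M t) (A t) (eu' t) + (L^2/(4*ρ₃)) * qf (M t) (eu' t) := by
    have habs : -(eu' t ⬝ᵥ G' t) ≤ L * mnorm (M t) (eu' t) * knorm (M t) (A t) (eu t)
        + L * mnorm (M t) (eu' t) * knorm (M t) (A t) (eu' t) := by
      have := hG'bd t ht (eu' t)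
      have h2 := neg_le_abs (eu' t ⬝ᵥ G' t)
      nlinarith [this]
    have S1 : L * mnorm (M t) (eu' t) * knorm (M t) (A t) (eu t)
        ≤ (ρ₂/2) * kq (M t) (A t) (eu' t) + (L^2/(4*(ρ₂/2))) * kq (M t) (A t) (eu t) := by
      refine young (by linarith) (hkq _) (hkq _) ?_
      rw [hknorm]
      calc L * mnorm (M t) (eu' t) * Real.sqrt (kq (M t) (A t) (eu t))
          = L * mnorm (M t) (eu' t) * Real.sqrt (kq (M t) (A t) (eu t)) := rfl
        _ ≤ L * Real.sqrt (kq (M t) (A t) (eu' t)) * Real.sqrt (kq (M t) (A t) (eu t)) :=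
            mul3 hL.le (hmn _) (Real.sqrt_nonneg _) (hmk _) le_rfl
    have S2 : L * mnorm (M t) (eu' t) * knorm (M t) (A t) (eu' t)
        ≤ ρ₃ * kq (M t) (A t) (eu' t) + (L^2/(4*ρ₃)) * qf (M t) (eu' t) := by
      refine young hρ₃0 (hkq _) (hqM _) ?_
      rw [hknorm]
      calc L * mnorm (M t) (eu' t) * Real.sqrt (kq (M t) (A t) (eu' t))
          = L * Real.sqrt (kq (M t) (A t) (eu' t)) * mnorm (M t) (eu' t) := by ring
        _ ≤ _ := mul3 hL.le (Real.sqrt_nonneg _) (hmn _) le_rfl le_rfl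
    have he : L^2/(4*(ρ₂/2)) = L^2/(2*ρ₂) := by ring_nf
    rw [he] at S1
    linarith
  have B9 : eu' t ⬝ᵥ (M' t).mulVec (dw t)
      ≤ ρ₃ * kq (M t) (A t) (eu' t) + (cstar^2/(4*ρ₃)) * qf (M t) (dw t) := by
    refine young hρ₃0 (hkq _) (hqM _) ?_
    calc eu' t ⬝ᵥ (M' t).mulVec (dw t) ≤ |eu' t ⬝ᵥ (M' t).mulVec (dw t)| := le_abs_self _
      _ ≤ cstar * mnorm (M t) (eu' t) * mnorm (M t) (dw t) := hM'bd t ht _ _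
      _ ≤ _ := mul3 hcstar.le (hmn _) (hmn _) (hmk _) le_rfl
  have B10 : eu' t ⬝ᵥ (M t).mulVec (dw' t)
      ≤ ρ₃ * kq (M t) (A t) (eu' t) + ((1:ℝ)^2/(4*ρ₃)) * qf (M t) (dw' t) := by
    refine young hρ₃0 (hkq _) (hqM _) ?_
    calc eu' t ⬝ᵥ (M t).mulVec (dw' t) ≤ |eu' t ⬝ᵥ (M t).mulVec (dw' t)| := le_abs_self _
      _ ≤ mnorm (M t) (eu' t) * mnorm (M t) (dw' t) := cs (hMpd t ht).posSemidef _ _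
      _ = 1 * mnorm (M t) (eu' t) * mnorm (M t) (dw' t) := by ring
      _ ≤ _ := mul3 zero_le_one (hmn _) (hmn _) (hmk _) le_rfl
  have B11 : eu' t ⬝ᵥ (M' t).mulVec (ew t)
      ≤ ρ₃ * kq (M t) (A t) (eu' t) + (cstar^2/(4*ρ₃)) * kq (M t) (A t) (ew t) := by
    refine young hρ₃0 (hkq _) (hkq _) ?_
    calc eu' t ⬝ᵥ (M' t).mulVec (ew t) ≤ |eu' t ⬝ᵥ (M' t).mulVec (ew t)| := le_abs_self _
      _ ≤ cstar * mnorm (M t) (eu' t) * mnorm (M t) (ew t) := hM'bd t ht _ _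
      _ ≤ _ := mul3 hcstar.le (hmn _) (hmn _) (hmk _) (hmk _)
  -- absorption inequalities
  set c : ℝ := L + 2*cstar + 1 + L^2/(2*ρ₂) + (2*cstar^2)/(4*ρ₃) + 1/(4*ρ₃) with hcdef
  have hnn1 : (0:ℝ) ≤ L^2/(2*ρ₂) := by positivity
  have hnn2 : (0:ℝ) ≤ (2*cstar^2)/(4*ρ₃) := by positivity
  have hnn3 : (0:ℝ) ≤ 1/(4*ρ₃) := by positivity
  have hnn4 : (0:ℝ) ≤ cstar^2/(4*ρ₃) := by positivity
  have hnn5 : (0:ℝ) ≤ L^2/(2*ρ₂) := by positivity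
  have hsQu : L/2 + cstar/2 + cstar^2/(4*ρ₃) + L^2/(2*ρ₂) ≤ c := by
    have e : c - (L/2 + cstar/2 + cstar^2/(4*ρ₃) + L^2/(2*ρ₂))
        = L/2 + 3*cstar/2 + 1 + cstar^2/(4*ρ₃) + 1/(4*ρ₃) := by
      rw [hcdef]; ring
    linarith [e, hnn3, hnn4, hL.le, hcstar.le]
  have hsQw : cstar/2 + (L/2 + L^2/(2*ρ₂)) + cstar/2 + cstar^2/(4*ρ₃) + cstar/2
      + 1/2 + cstar^2/(4*ρ₃) ≤ c := by
    have e : c - (cstar/2 + (L/2 + L^2/(2*ρ₂)) + cstar/2 + cstar^2/(4*ρ₃) + cstar/2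
        + 1/2 + cstar^2/(4*ρ₃)) = L/2 + cstar/2 + 1/2 + 1/(4*ρ₃) := by
      rw [hcdef]; ring
    linarith [e, hnn3, hL.le, hcstar.le]
  have hsD1 : cstar/2 ≤ c := by
    have e : c - cstar/2 = L + 3*cstar/2 + 1 + L^2/(2*ρ₂) + 2*(cstar^2/(4*ρ₃)) + 1/(4*ρ₃) := by
      rw [hcdef]; ring
    linarith [e, hnn3, hnn4, hnn5, hL.le, hcstar.le]
  have hsD2 : (1:ℝ)/2 ≤ c := by
    have e : c - 1/2 = L + 2*cstar + 1/2 + L^2/(2*ρ₂) + 2*(cstar^2/(4*ρ₃)) + 1/(4*ρ₃) := by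
      rw [hcdef]; ring
    linarith [e, hnn3, hnn4, hnn5, hL.le, hcstar.le]
  have hsD3 : cstar^2/(4*ρ₃) ≤ c := by
    have e : c - cstar^2/(4*ρ₃) = L + 2*cstar + 1 + L^2/(2*ρ₂) + cstar^2/(4*ρ₃) + 1/(4*ρ₃) := by
      rw [hcdef]; ring
    linarith [e, hnn3, hnn4, hnn5, hL.le, hcstar.le]
  have hsD4 : (1:ℝ)^2/(4*ρ₃) ≤ c := by
    have e : c - (1:ℝ)^2/(4*ρ₃) = L + 2*cstar + 1 + L^2/(2*ρ₂) + 2*(cstar^2/(4*ρ₃)) := by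
      rw [hcdef]; ring
    linarith [e, hnn4, hnn5, hL.le, hcstar.le]
  have HQu : (L/2 + cstar/2 + cstar^2/(4*ρ₃) + L^2/(2*ρ₂)) * kq (M t) (A t) (eu t)
      ≤ c * kq (M t) (A t) (eu t) := mul_le_mul_of_nonneg_right hsQu (hkq _)
  have HQw : (cstar/2 + (L/2 + L^2/(2*ρ₂)) + cstar/2 + cstar^2/(4*ρ₃) + cstar/2
      + 1/2 + cstar^2/(4*ρ₃)) * kq (M t) (A t) (ew t)
      ≤ c * kq (M t) (A t) (ew t) := mul_le_mul_of_nonneg_right hsQw (hkq _)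
  have HD1 : cstar/2 * qf (M t) (du t) ≤ c * qf (M t) (du t) :=
    mul_le_mul_of_nonneg_right hsD1 (hqM _)
  have HD2 : (1:ℝ)/2 * qf (M t) (du' t) ≤ c * qf (M t) (du' t) :=
    mul_le_mul_of_nonneg_right hsD2 (hqM _)
  have HD3 : cstar^2/(4*ρ₃) * qf (M t) (dw t) ≤ c * qf (M t) (dw t) :=
    mul_le_mul_of_nonneg_right hsD3 (hqM _)
  have HD4 : (1:ℝ)^2/(4*ρ₃) * qf (M t) (dw' t) ≤ c * qf (M t) (dw' t) :=
    mul_le_mul_of_nonneg_right hsD4 (hqM _)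
  have HP1 : (L^2/(4*ρ₃)) * qf (M t) (eu' t)
      ≤ ((L^2+6)/(4*ρ₃)) * qf (M t) (eu' t) := by
    apply mul_le_mul_of_nonneg_right _ (hqM _)
    have e : (L^2+6)/(4*ρ₃) - L^2/(4*ρ₃) = 6 * (1/(4*ρ₃)) := by ring
    linarith [e, hnn3]
  have HP2 : (ρ₂ + 6*ρ₃) * kq (M t) (A t) (eu' t)
      ≤ (ρ₂ + (L^2+6)*ρ₃) * kq (M t) (A t) (eu' t) := by
    apply mul_le_mul_of_nonneg_right _ (hkq _)
    nlinarith [mul_nonneg (sq_nonneg L) hρ₃0.le]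
  have hqfA : qf (A t) (eu' t) = eu' t ⬝ᵥ (A t).mulVec (eu' t) := rfl
  rw [dA, dF, dM', dM]
  linarith [B1, B2, B3, B4, B5, B6, B7, B8, B9, B10, B11, eqB, eqC, symm1, symm2,
    HQu, HQw, HD1, HD2, HD3, HD4, HP1, HP2, hqfA.le, hqfA.ge]
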